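/- arXiv:2204.09972 — 2 statements merged into one kernel-verified Lean document; each statement's English description precedes it below -/
import Mathlib

section
/- Let E be a finite nonempty type, let P be an irreducible stochastic matrix on E, and let π be an invariant probability vector of P. If X₁ and X₂ are two E×E real matrices both satisfying (I − P) X = I − e π^T, then there exists a vector β : E → ℝ such that X₁(i,j) = X₂(i,j) + β(j) for all i, j ∈ E. -/
/-!
Subtracting the two equations gives `P (X₁ - X₂) = X₁ - X₂`, so every column of `X₁ - X₂` is a
`P`-harmonic vector. For an irreducible stochastic matrix such a vector is constant (maximum
principle: at a maximum `y i`, the row `i` of `P ^ n` averages `y` to `y i`, so `y` also attains the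
maximum at every state reachable from `i`, i.e. everywhere). Hence `X₁ - X₂` is constant down each
column.
-/

namespace Matrix

theorem pow_mulVec_eq_self {R n : Type*} [Fintype n] [DecidableEq n] [Semiring R]
    {M : Matrix n n R} {y : n → R} (hy : M *ᵥ y = y) (k : ℕ) :
    (M ^ k) *ᵥ y = y := by
  induction k with
  | zero => simp
  | succ k ih => rw [pow_succ, ← mulVec_mulVec, hy, ih]

variable {R n : Type*} [Fintype n] [DecidableEq n]
  [CommRing R] [LinearOrder R] [IsStrictOrderedRing R]

theorem apply_eq_of_mulVec_eq_self_of_isMax {M : Matrix n n R} (hM : M ∈ rowStochastic R n)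
    {y : n → R} (hy : M *ᵥ y = y) {i k : n} (hmax : ∀ l, y l ≤ y i) (hpos : 0 < M i k) :
    y k = y i := by
  have hsum : ∑ l, M i l * (y i - y l) = 0 := by
    have hrow : ∑ l, M i l * y l = y i := congrFun hy i
    simp only [mul_sub, Finset.sum_sub_distrib, ← Finset.sum_mul,
      sum_row_of_mem_rowStochastic hM, one_mul, hrow, sub_self]
  have hterm : M i k * (y i - y k) = 0 :=
    (Finset.sum_eq_zero_iff_of_nonneg fun l _ =>
      mul_nonneg (nonneg_of_mem_rowStochastic hM) (sub_nonneg.mpr (hmax l))).mp hsum k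
      (Finset.mem_univ k)
  exact (sub_eq_zero.mp ((mul_eq_zero.mp hterm).resolve_left hpos.ne')).symm

theorem apply_eq_of_mulVec_eq_self {M : Matrix n n R} (hM : M ∈ rowStochastic R n)
    (hreach : ∀ i j, ∃ k : ℕ, 0 < (M ^ k) i j) {y : n → R} (hy : M *ᵥ y = y) (i j : n) :
    y i = y j := by
  obtain ⟨i₀, -, hmax⟩ := Finset.exists_max_image Finset.univ y ⟨i, Finset.mem_univ i⟩
  have hconst : ∀ l, y l = y i₀ := fun l => by
    obtain ⟨k, hpos⟩ := hreach i₀ l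
    exact apply_eq_of_mulVec_eq_self_of_isMax (pow_mem hM k) (pow_mulVec_eq_self hy k)
      (fun m => hmax m (Finset.mem_univ m)) hpos
  rw [hconst i, hconst j]

end Matrix

open Matrix BigOperators

theorem stmt3_general {E : Type*} [Fintype E] [DecidableEq E]
    (P : Matrix E E ℝ)
    (hP0 : ∀ i j, 0 ≤ P i j) (hP1 : ∀ i, ∑ j, P i j = 1)
    (hirr : ∀ i j, ∃ n, 1 ≤ n ∧ 0 < (P ^ n) i j)
    (π : E → ℝ)
    (X₁ X₂ : Matrix E E ℝ)
    (hX₁ : (1 - P) * X₁ = 1 - Matrix.vecMulVec (fun _ => (1 : ℝ)) π)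
    (hX₂ : (1 - P) * X₂ = 1 - Matrix.vecMulVec (fun _ => (1 : ℝ)) π) :
    ∃ β : E → ℝ, ∀ i j, X₁ i j = X₂ i j + β j := by
  have hP : P ∈ rowStochastic ℝ E := mem_rowStochastic_iff_sum.mpr ⟨hP0, hP1⟩
  have hPY : P * (X₁ - X₂) = X₁ - X₂ := by
    have h : (1 - P) * (X₁ - X₂) = 0 := by rw [Matrix.mul_sub, hX₁, hX₂, sub_self]
    rw [Matrix.sub_mul, Matrix.one_mul, sub_eq_zero] at h
    exact h.symm
  have hcol : ∀ j, P *ᵥ (fun k => (X₁ - X₂) k j) = fun k => (X₁ - X₂) k j := fun j => by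
    funext k
    exact congrFun₂ hPY k j
  refine ⟨fun j => (X₁ - X₂) j j, fun i j => ?_⟩
  have hij := apply_eq_of_mulVec_eq_self hP (fun i j => (hirr i j).imp fun _ => And.right)
    (hcol j) i j
  simp only [Matrix.sub_apply] at hij ⊢
  linarith

theorem stmt3 {E : Type*} [Fintype E] [Nonempty E] [DecidableEq E]
    (P : Matrix E E ℝ)
    (hP0 : ∀ i j, 0 ≤ P i j) (hP1 : ∀ i, ∑ j, P i j = 1)
    (hirr : ∀ i j, ∃ n, 1 ≤ n ∧ 0 < (P ^ n) i j)
    (π : E → ℝ) (hπ0 : ∀ i, 0 ≤ π i) (hπ1 : ∑ i, π i = 1)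
    (hπP : π ᵥ* P = π)
    (X₁ X₂ : Matrix E E ℝ)
    (hX₁ : (1 - P) * X₁ = 1 - Matrix.vecMulVec (fun _ => (1 : ℝ)) π)
    (hX₂ : (1 - P) * X₂ = 1 - Matrix.vecMulVec (fun _ => (1 : ℝ)) π) :
    ∃ β : E → ℝ, ∀ i j, X₁ i j = X₂ i j + β j :=
  stmt3_general P hP0 hP1 hirr π X₁ X₂ hX₁ hX₂
end

section
/- Let E be a finite nonempty type, let P be an irreducible stochastic matrix on E, and let A ⊆ E be a nonempty subset with complement B. Then I − P_{BB} is invertible and the censored matrix P^{(A)} := P_{AA} + P_{AB} (I − P_{BB})^{-1} P_{BA} is an irreducible stochastic matrix on A: for all i, j ∈ A there exists n ≥ 1 with ((P^{(A)})^n)(i,j) > 0. -/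
/-!
Write `B = Aᶜ` and `Q = P_BB`. Every `b ∈ B` reaches `A`, so for some `k` the row of `Qᵏ` at `b`
sums to less than one. A minimum principle then shows that `(1 - Q) x ≥ 0` forces `x ≥ 0`; hence
`1 - Q` is invertible and `G = (1 - Q)⁻¹ P_BA` is nonnegative, with unit row sums because
`P_BA 1 = (1 - Q) 1`. From `G = P_BA + Q G`, `G b a > 0` as soon as `P` has a path from `b` to `a`
through `B`. Cutting a path of `P` between two points of `A` at its visits to `A` therefore gives
a path of the censored matrix `P_AA + P_AB G`.
-/

open Matrix BigOperators

/-- The submatrix of `P` with rows indexed by `S` and columns indexed by `T`. -/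
def subBlock {E : Type*} (P : Matrix E E ℝ) (S T : Set E) : Matrix ↥S ↥T ℝ :=
  Matrix.of fun i j => P i j

namespace Matrix

section Nonneg

variable {l m n R : Type*} [Fintype m] [Field R] [LinearOrder R] [IsStrictOrderedRing R]

theorem apply_le_add_mul_apply {Y : Matrix l n R} {Z : Matrix l m R} {W : Matrix m n R}
    (hZ : ∀ i j, 0 ≤ Z i j) (hW : ∀ i j, 0 ≤ W i j) (i : l) (j : n) :
    Y i j ≤ (Y + Z * W) i j :=
  le_add_of_nonneg_right (Finset.sum_nonneg fun k _ => mul_nonneg (hZ i k) (hW k j))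

theorem mul_apply_le_add_mul_apply {Y : Matrix l n R} {Z : Matrix l m R} {W : Matrix m n R}
    (hY : ∀ i j, 0 ≤ Y i j) (hZ : ∀ i j, 0 ≤ Z i j) (hW : ∀ i j, 0 ≤ W i j)
    (i : l) (k : m) (j : n) :
    Z i k * W k j ≤ (Y + Z * W) i j :=
  le_add_of_nonneg_of_le (hY i j) <|
    Finset.single_le_sum (f := fun k => Z i k * W k j)
      (fun k _ => mul_nonneg (hZ i k) (hW k j)) (Finset.mem_univ k)

end Nonneg

theorem inv_one_sub_mul_eq_add {m n R : Type*} [Fintype n] [DecidableEq n] [CommRing R]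
    {Q : Matrix n n R} (hU : IsUnit (1 - Q)) (B : Matrix n m R) :
    (1 - Q)⁻¹ * B = B + Q * ((1 - Q)⁻¹ * B) := by
  have := mul_nonsing_inv_cancel_left _ B ((isUnit_iff_isUnit_det _).1 hU)
  rw [Matrix.sub_mul, Matrix.one_mul] at this
  exact eq_add_of_sub_eq this

variable {m n R : Type*} [Fintype n] [DecidableEq n]
  [Field R] [LinearOrder R] [IsStrictOrderedRing R]

theorem exists_pow_apply_pos_iff_transGen {M : Matrix n n R} (hM : ∀ i j, 0 ≤ M i j)
    {i j : n} :
    (∃ k, 1 ≤ k ∧ 0 < (M ^ k) i j) ↔ Relation.TransGen (fun a b => 0 < M a b) i j := by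
  constructor
  · rintro ⟨k, hk, hpos⟩
    induction k, hk using Nat.le_induction generalizing j with
    | base => exact .single (by simpa using hpos)
    | succ k _ ih =>
      rw [pow_succ, mul_apply] at hpos
      obtain ⟨c, -, hc⟩ := Finset.exists_lt_of_sum_lt (f := fun _ => 0)
        (g := fun c => (M ^ k) i c * M c j) (by simpa using hpos)
      exact .tail (ih (pos_of_mul_pos_left hc (hM c j)))
        (pos_of_mul_pos_right hc (pow_apply_nonneg hM k i c))
  · intro h
    induction h with
    | single hij => exact ⟨1, le_rfl, by simpa using hij⟩
    | @tail c j _ hcj ih =>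
      obtain ⟨k, hk, hpos⟩ := ih
      refine ⟨k + 1, by omega, ?_⟩
      rw [pow_succ, mul_apply]
      exact (mul_pos hpos hcj).trans_le <|
        Finset.single_le_sum (f := fun c => (M ^ k) i c * M c j)
          (fun c _ => mul_nonneg (pow_apply_nonneg hM k i c) (hM c j)) (Finset.mem_univ c)

/-- `x ≥ Q x` iterates to `x ≥ Qᵏ x`, impossible at a negative minimum of `x` where the row of `Qᵏ`
sums to less than one. -/
theorem nonneg_of_one_sub_mulVec_nonneg {Q : Matrix n n R} (hQ : ∀ i j, 0 ≤ Q i j)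
    (hleak : ∀ i, ∃ k, ∑ j, (Q ^ k) i j < 1) {x : n → R} (hx : ∀ i, 0 ≤ ((1 - Q) *ᵥ x) i)
    (i : n) : 0 ≤ x i := by
  have hQx : ∀ i, (Q *ᵥ x) i ≤ x i := fun i => by simpa [sub_mulVec] using hx i
  have hpow : ∀ k i, (Q ^ k *ᵥ x) i ≤ x i := by
    intro k
    induction k with
    | zero => simp
    | succ k ih =>
      intro i
      rw [pow_succ', ← mulVec_mulVec]
      exact le_trans (Finset.sum_le_sum fun j _ => mul_le_mul_of_nonneg_left (ih j) (hQ i j))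
        (hQx i)
  by_contra hneg
  have : Nonempty n := ⟨i⟩
  obtain ⟨i₀, hmin⟩ := Finite.exists_min x
  have hneg₀ : x i₀ < 0 := (hmin i).trans_lt (not_le.1 hneg)
  obtain ⟨k, hk⟩ := hleak i₀
  have : (∑ j, (Q ^ k) i₀ j) * x i₀ ≤ x i₀ := calc
    (∑ j, (Q ^ k) i₀ j) * x i₀ = ∑ j, (Q ^ k) i₀ j * x i₀ := Finset.sum_mul ..
    _ ≤ ∑ j, (Q ^ k) i₀ j * x j :=
      Finset.sum_le_sum fun j _ => mul_le_mul_of_nonneg_left (hmin j) (pow_apply_nonneg hQ k i₀ j)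
    _ ≤ x i₀ := hpow k i₀
  nlinarith

theorem isUnit_one_sub_of_exists_sum_pow_lt_one {Q : Matrix n n R} (hQ : ∀ i j, 0 ≤ Q i j)
    (hleak : ∀ i, ∃ k, ∑ j, (Q ^ k) i j < 1) : IsUnit (1 - Q) := by
  have hle : ∀ x y : n → R, (1 - Q) *ᵥ x = (1 - Q) *ᵥ y → ∀ i, y i ≤ x i := fun x y hxy i => by
    simpa using nonneg_of_one_sub_mulVec_nonneg hQ hleak (x := x - y) (by simp [mulVec_sub, hxy]) i
  exact mulVec_injective_iff_isUnit.1 fun x y hxy =>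
    funext fun i => le_antisymm (hle y x hxy.symm i) (hle x y hxy i)

theorem inv_one_sub_mul_apply_nonneg {Q : Matrix n n R} (hQ : ∀ i j, 0 ≤ Q i j)
    (hleak : ∀ i, ∃ k, ∑ j, (Q ^ k) i j < 1) {B : Matrix n m R} (hB : ∀ i j, 0 ≤ B i j)
    (i : n) (j : m) : 0 ≤ ((1 - Q)⁻¹ * B) i j := by
  have hdet := (isUnit_iff_isUnit_det _).1 (isUnit_one_sub_of_exists_sum_pow_lt_one hQ hleak)
  refine nonneg_of_one_sub_mulVec_nonneg hQ hleak (x := fun i => ((1 - Q)⁻¹ * B) i j)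
    (fun i => ?_) i
  exact (hB i j).trans_eq (congrFun (congrFun (mul_nonsing_inv_cancel_left _ B hdet) i) j).symm

theorem sum_inv_one_sub_mul_apply [Fintype m] {Q : Matrix n n R} {B : Matrix n m R}
    (hU : IsUnit (1 - Q)) (hsum : ∀ i, ∑ a, B i a + ∑ j, Q i j = 1) (i : n) :
    ∑ a, ((1 - Q)⁻¹ * B) i a = 1 := by
  have hB : B *ᵥ 1 = (1 - Q) *ᵥ 1 := by
    rw [sub_mulVec, one_mulVec]
    funext i
    simp only [Pi.sub_apply, Pi.one_apply, mulVec, dotProduct, mul_one]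
    linarith [hsum i]
  calc ∑ a, ((1 - Q)⁻¹ * B) i a = (((1 - Q)⁻¹ * B) *ᵥ 1) i := by simp [mulVec, dotProduct]
    _ = ((1 - Q)⁻¹ *ᵥ ((1 - Q) *ᵥ 1)) i := by rw [← mulVec_mulVec, hB]
    _ = 1 := by
      rw [mulVec_mulVec, nonsing_inv_mul _ ((isUnit_iff_isUnit_det _).1 hU), one_mulVec]
      rfl

end Matrix

open Relation

section Censored

variable {E : Type*} [Fintype E]

theorem sum_subBlock_add_sum_subBlock_compl (P : Matrix E E ℝ) (S T : Set E)
    [DecidablePred (· ∈ T)] (i : S) :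
    ∑ j, subBlock P S T i j + ∑ j, subBlock P S Tᶜ i j = ∑ j, P i j :=
  Fintype.sum_subtype_add_sum_subtype (· ∈ T) (P i)

variable [DecidableEq E] {P : Matrix E E ℝ}

theorem subBlock_pow_apply_le (hP : ∀ i j, 0 ≤ P i j) (S : Set E) [Fintype S] (k : ℕ)
    (i j : S) : (subBlock P S S ^ k) i j ≤ (P ^ k) i j := by
  induction k generalizing j with
  | zero =>
    rcases eq_or_ne i j with rfl | h
    · simp
    · simp [one_apply, h, Subtype.val_injective.ne h]
  | succ k ih =>
    rw [pow_succ, pow_succ, mul_apply, mul_apply]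
    calc ∑ c, (subBlock P S S ^ k) i c * subBlock P S S c j
        ≤ ∑ c : S, (P ^ k) i c * P c j :=
          Finset.sum_le_sum fun c _ => mul_le_mul_of_nonneg_right (ih c) (hP c j)
      _ = ∑ c ∈ Finset.univ.map (Function.Embedding.subtype (· ∈ S)), (P ^ k) i c * P c j := by
          rw [Finset.sum_map]; rfl
      _ ≤ ∑ c, (P ^ k) i c * P c j :=
          Finset.sum_le_univ_sum_of_nonneg fun c => mul_nonneg (pow_apply_nonneg hP k i c) (hP c j)

variable {A : Set E} [DecidablePred (· ∈ A)]

theorem exists_sum_subBlock_compl_pow_apply_lt_one (hP : P ∈ rowStochastic ℝ E)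
    (hirr : ∀ i j, ∃ n, 1 ≤ n ∧ 0 < (P ^ n) i j) (hA : A.Nonempty) (b : ↥Aᶜ) :
    ∃ k, ∑ c, (subBlock P Aᶜ Aᶜ ^ k) b c < 1 := by
  obtain ⟨a, ha⟩ := hA
  obtain ⟨k, -, hk⟩ := hirr b a
  refine ⟨k, ?_⟩
  have hPk := pow_mem hP k
  have hsplit := sum_subBlock_add_sum_subBlock_compl (P ^ k) Aᶜ A b
  rw [sum_row_of_mem_rowStochastic hPk] at hsplit
  have hmassA : (P ^ k) b a ≤ ∑ c, subBlock (P ^ k) Aᶜ A b c :=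
    Finset.single_le_sum (f := fun c : A => (P ^ k) b c)
      (fun c _ => nonneg_of_mem_rowStochastic hPk) (Finset.mem_univ ⟨a, ha⟩)
  have hmassB : ∑ c, (subBlock P Aᶜ Aᶜ ^ k) b c ≤ ∑ c, subBlock (P ^ k) Aᶜ Aᶜ b c :=
    Finset.sum_le_sum fun c _ =>
      subBlock_pow_apply_le (fun _ _ => nonneg_of_mem_rowStochastic hP) Aᶜ k b c
  linarith

variable (P A) in
/-- `hittingMatrix P A b a` is the probability that the chain started at `b ∉ A` first enters `A`
at `a`. -/
noncomputable def hittingMatrix : Matrix ↥Aᶜ A ℝ :=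
  (1 - subBlock P Aᶜ Aᶜ)⁻¹ * subBlock P Aᶜ A

variable (P A) in
noncomputable def censored : Matrix A A ℝ :=
  subBlock P A A + subBlock P A Aᶜ * (1 - subBlock P Aᶜ Aᶜ)⁻¹ * subBlock P Aᶜ A

theorem censored_eq : censored P A = subBlock P A A + subBlock P A Aᶜ * hittingMatrix P A := by
  rw [censored, hittingMatrix, Matrix.mul_assoc]

theorem hittingMatrix_eq (hU : IsUnit (1 - subBlock P Aᶜ Aᶜ)) :
    hittingMatrix P A = subBlock P Aᶜ A + subBlock P Aᶜ Aᶜ * hittingMatrix P A :=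
  inv_one_sub_mul_eq_add hU _

theorem censored_apply_nonneg (hP : ∀ i j, 0 ≤ P i j) (hG : ∀ b a, 0 ≤ hittingMatrix P A b a)
    (i j : A) : 0 ≤ censored P A i j := by
  rw [censored_eq]
  exact (hP i j).trans (apply_le_add_mul_apply (Y := subBlock P A A) (Z := subBlock P A Aᶜ)
    (fun _ _ => hP _ _) hG i j)

theorem sum_censored_apply (hP : ∀ i, ∑ j, P i j = 1)
    (hG : ∀ b, ∑ a, hittingMatrix P A b a = 1) (i : A) : ∑ j, censored P A i j = 1 := by
  rw [censored_eq]
  simp only [Matrix.add_apply, Finset.sum_add_distrib, mul_apply]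
  rw [Finset.sum_comm]
  simp only [← Finset.mul_sum, hG, mul_one]
  rw [← hP i]
  exact sum_subBlock_add_sum_subBlock_compl P A A i

theorem hittingMatrix_apply_pos_of_pos (hP : ∀ i j, 0 ≤ P i j)
    (hU : IsUnit (1 - subBlock P Aᶜ Aᶜ)) (hG : ∀ b a, 0 ≤ hittingMatrix P A b a)
    (b : ↥Aᶜ) (a : A) (h : 0 < P b a) : 0 < hittingMatrix P A b a := by
  rw [hittingMatrix_eq hU]
  exact h.trans_le (apply_le_add_mul_apply (Y := subBlock P Aᶜ A) (Z := subBlock P Aᶜ Aᶜ)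
    (fun _ _ => hP _ _) hG b a)

theorem hittingMatrix_apply_pos_of_pos_of_pos (hP : ∀ i j, 0 ≤ P i j)
    (hU : IsUnit (1 - subBlock P Aᶜ Aᶜ)) (hG : ∀ b a, 0 ≤ hittingMatrix P A b a)
    (b c : ↥Aᶜ) (a : A) (hbc : 0 < P b c) (hc : 0 < hittingMatrix P A c a) :
    0 < hittingMatrix P A b a := by
  rw [hittingMatrix_eq hU]
  exact (mul_pos hbc hc).trans_le (mul_apply_le_add_mul_apply (Y := subBlock P Aᶜ A)
    (Z := subBlock P Aᶜ Aᶜ) (fun _ _ => hP _ _) (fun _ _ => hP _ _) hG b c a)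

theorem censored_apply_pos_of_pos (hP : ∀ i j, 0 ≤ P i j)
    (hG : ∀ b a, 0 ≤ hittingMatrix P A b a) (i a : A) (h : 0 < P i a) :
    0 < censored P A i a := by
  rw [censored_eq]
  exact h.trans_le (apply_le_add_mul_apply (Y := subBlock P A A) (Z := subBlock P A Aᶜ)
    (fun _ _ => hP _ _) hG i a)

theorem censored_apply_pos_of_pos_of_pos (hP : ∀ i j, 0 ≤ P i j)
    (hG : ∀ b a, 0 ≤ hittingMatrix P A b a) (i a : A) (b : ↥Aᶜ) (hib : 0 < P i b)
    (hb : 0 < hittingMatrix P A b a) : 0 < censored P A i a := by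
  rw [censored_eq]
  exact (mul_pos hib hb).trans_le (mul_apply_le_add_mul_apply (Y := subBlock P A A)
    (Z := subBlock P A Aᶜ) (fun _ _ => hP _ _) (fun _ _ => hP _ _) hG i b a)

theorem transGen_censored_of_transGen (hP : ∀ i j, 0 ≤ P i j)
    (hU : IsUnit (1 - subBlock P Aᶜ Aᶜ)) (hG : ∀ b a, 0 ≤ hittingMatrix P A b a) {i j : A}
    (h : TransGen (fun x y => 0 < P x y) i j) :
    TransGen (fun x y => 0 < censored P A x y) i j := by
  suffices key : ∀ u, TransGen (fun x y => 0 < P x y) u j →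
      (∀ hu : u ∈ A, TransGen (fun x y => 0 < censored P A x y) ⟨u, hu⟩ j) ∧
      (∀ hu : u ∉ A, ∃ a, 0 < hittingMatrix P A ⟨u, hu⟩ a ∧
        ReflTransGen (fun x y => 0 < censored P A x y) a j) from
    (key i h).1 i.2
  intro u hu
  induction hu using TransGen.head_induction_on with
  | @single u h =>
    exact ⟨fun hu => .single (censored_apply_pos_of_pos hP hG ⟨u, hu⟩ j h),
      fun hu => ⟨j, hittingMatrix_apply_pos_of_pos hP hU hG ⟨u, hu⟩ j h, .refl⟩⟩
  | @head u v huv _ ih =>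
    by_cases hv : v ∈ A
    · have hvj := ih.1 hv
      exact ⟨fun hu => .head (censored_apply_pos_of_pos hP hG ⟨u, hu⟩ ⟨v, hv⟩ huv) hvj,
        fun hu => ⟨⟨v, hv⟩, hittingMatrix_apply_pos_of_pos hP hU hG ⟨u, hu⟩ ⟨v, hv⟩ huv,
          hvj.to_reflTransGen⟩⟩
    · obtain ⟨a, hva, haj⟩ := ih.2 hv
      exact ⟨fun hu => .head' (censored_apply_pos_of_pos_of_pos hP hG ⟨u, hu⟩ a ⟨v, hv⟩ huv hva)
          haj,
        fun hu => ⟨a, hittingMatrix_apply_pos_of_pos_of_pos hP hU hG ⟨u, hu⟩ ⟨v, hv⟩ a huv hva,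
          haj⟩⟩

end Censored

theorem stmt19_general {E : Type*} [Fintype E] [DecidableEq E]
    (P : Matrix E E ℝ)
    (hP0 : ∀ i j, 0 ≤ P i j) (hP1 : ∀ i, ∑ j, P i j = 1)
    (hirr : ∀ i j, ∃ n, 1 ≤ n ∧ 0 < (P ^ n) i j)
    (A : Set E) [DecidablePred (· ∈ A)] (hA : A.Nonempty) :
    IsUnit (1 - subBlock P Aᶜ Aᶜ) ∧
    (∀ i j : ↥A, 0 ≤ (subBlock P A A +
      subBlock P A Aᶜ * (1 - subBlock P Aᶜ Aᶜ)⁻¹ * subBlock P Aᶜ A) i j) ∧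
    (∀ i : ↥A, ∑ j : ↥A, (subBlock P A A +
      subBlock P A Aᶜ * (1 - subBlock P Aᶜ Aᶜ)⁻¹ * subBlock P Aᶜ A) i j = 1) ∧
    ∀ i j : ↥A, ∃ n, 1 ≤ n ∧ 0 < ((subBlock P A A +
      subBlock P A Aᶜ * (1 - subBlock P Aᶜ Aᶜ)⁻¹ * subBlock P Aᶜ A) ^ n) i j := by
  have hQ : ∀ b c, 0 ≤ subBlock P Aᶜ Aᶜ b c := fun b c => hP0 b c
  have hleak := exists_sum_subBlock_compl_pow_apply_lt_one
    (mem_rowStochastic_iff_sum.2 ⟨hP0, hP1⟩) hirr hA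
  have hU := isUnit_one_sub_of_exists_sum_pow_lt_one hQ hleak
  have hG : ∀ b a, 0 ≤ hittingMatrix P A b a :=
    inv_one_sub_mul_apply_nonneg hQ hleak fun b a => hP0 b a
  have hG1 : ∀ b, ∑ a, hittingMatrix P A b a = 1 := sum_inv_one_sub_mul_apply hU fun b =>
    (sum_subBlock_add_sum_subBlock_compl P Aᶜ A b).trans (hP1 b)
  have hC : ∀ i j, 0 ≤ censored P A i j := censored_apply_nonneg hP0 hG
  refine ⟨hU, hC, sum_censored_apply hP1 hG1, fun i j => ?_⟩
  exact (exists_pow_apply_pos_iff_transGen hC).2 <| transGen_censored_of_transGen hP0 hU hG <|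
    (exists_pow_apply_pos_iff_transGen hP0).1 (hirr i j)

theorem stmt19 {E : Type*} [Fintype E] [Nonempty E] [DecidableEq E]
    (P : Matrix E E ℝ)
    (hP0 : ∀ i j, 0 ≤ P i j) (hP1 : ∀ i, ∑ j, P i j = 1)
    (hirr : ∀ i j, ∃ n, 1 ≤ n ∧ 0 < (P ^ n) i j)
    (A : Set E) [DecidablePred (· ∈ A)] (hA : A.Nonempty) :
    IsUnit (1 - subBlock P Aᶜ Aᶜ) ∧
    (∀ i j : ↥A, 0 ≤ (subBlock P A A +
      subBlock P A Aᶜ * (1 - subBlock P Aᶜ Aᶜ)⁻¹ * subBlock P Aᶜ A) i j) ∧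
    (∀ i : ↥A, ∑ j : ↥A, (subBlock P A A +
      subBlock P A Aᶜ * (1 - subBlock P Aᶜ Aᶜ)⁻¹ * subBlock P Aᶜ A) i j = 1) ∧
    ∀ i j : ↥A, ∃ n, 1 ≤ n ∧ 0 < ((subBlock P A A +
      subBlock P A Aᶜ * (1 - subBlock P Aᶜ Aᶜ)⁻¹ * subBlock P Aᶜ A) ^ n) i j :=
  stmt19_general P hP0 hP1 hirr A hA
end
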